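/- The poset {0,1,2,3}^n with the order ≤_n is order-isomorphic to the disjoint union of 2·4^{n-1} copies of the two-element chain; in particular every element is comparable with exactly one other element. -/

import Mathlib

/-- The order `≤ₙ` on `P_n = {0,1,2,3}^n`. -/
def leFin {n : ℕ} (x y : Fin n → Fin 4) : Prop :=
  x = y ∨
  (∃ l : Fin n, (∀ k, k < l → x k = y k) ∧ x l = 2 ∧ y l = 3 ∧
    ∀ k, l < k → x k = y k ∧ (x k = 0 ∨ x k = 1)) ∨
  (∃ h : 0 < n, x ⟨0, h⟩ = 0 ∧ y ⟨0, h⟩ = 1 ∧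
    ∀ k : Fin n, 1 ≤ (k : ℕ) → x k = y k ∧ (x k = 0 ∨ x k = 1))

/-- The disjoint union of `m` copies of the two-element chain `Bool`. -/
def TwoChains (m : ℕ) := Fin m × Bool

instance (m : ℕ) : PartialOrder (TwoChains m) where
  le a b := a.1 = b.1 ∧ a.2 ≤ b.2
  le_refl a := ⟨rfl, le_refl _⟩
  le_trans a b c h1 h2 := ⟨h1.1.trans h2.1, le_trans h1.2 h2.2⟩
  le_antisymm a b h1 h2 := Prod.ext h1.1 (le_antisymm h1.2 h2.2)

/-! The two-element chains are the orbits of an involution. The pivot of a word `x` is its last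
coordinate carrying a letter `2` or `3` (the first coordinate if there is none); replacing the
letter at the pivot by its partner (`0 ↔ 1`, `2 ↔ 3`) leaves the pivot in place, hence is a
fixed-point-free involution `σ`, and `x <ₙ y` holds exactly when `y = σ x` and the letter of `x`
at the pivot is even. On any finite set, a relation `x = y ∨ (y = σ x ∧ b x = false)` built
from an involution `σ` and a bit `b` negated by `σ` is a disjoint union of two-element chains,
indexed by the elements with `b = false`. -/

lemma TwoChains.le_iff {m : ℕ} {a b : TwoChains m} : a ≤ b ↔ a.1 = b.1 ∧ a.2 ≤ b.2 :=
  Iff.rfl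

namespace PairedInvolution

variable {α : Type*} {σ : α → α} {b : α → Bool}

def Rel (σ : α → α) (b : α → Bool) (x y : α) : Prop :=
  x = y ∨ (y = σ x ∧ b x = false)

def bottom (σ : α → α) (b : α → Bool) (x : α) : α :=
  if b x then σ x else x

lemma bottom_of_false {x : α} (hx : b x = false) : bottom σ b x = x := by
  simp [bottom, hx]

lemma bottom_of_true {x : α} (hx : b x = true) : bottom σ b x = σ x := by
  simp [bottom, hx]

lemma apply_ne_self (hb : ∀ x, b (σ x) = !b x) (x : α) : σ x ≠ x := fun h => by
  simpa [h] using hb x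

lemma b_bottom (hb : ∀ x, b (σ x) = !b x) (x : α) : b (bottom σ b x) = false := by
  cases hx : b x <;> simp [bottom, hx, hb]

lemma bottom_σ (hσ : Function.Involutive σ) (hb : ∀ x, b (σ x) = !b x) (x : α) :
    bottom σ b (σ x) = bottom σ b x := by
  cases hx : b x <;> simp [bottom, hx, hb, hσ x]

def equivProdBool (hσ : Function.Involutive σ) (hb : ∀ x, b (σ x) = !b x) :
    α ≃ {x // b x = false} × Bool where
  toFun x := (⟨bottom σ b x, b_bottom hb x⟩, b x)
  invFun p := if p.2 then σ p.1 else p.1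
  left_inv x := by cases hx : b x <;> simp [bottom, hx, hσ x]
  right_inv := by
    rintro ⟨⟨v, hv⟩, _ | _⟩
    · simp [bottom_of_false hv, hv]
    · simp [bottom_of_true (by simp [hb, hv] : b (σ v) = true), hσ v, hb, hv]

lemma rel_iff (hσ : Function.Involutive σ) (hb : ∀ x, b (σ x) = !b x) {x y : α} :
    Rel σ b x y ↔ bottom σ b x = bottom σ b y ∧ b x ≤ b y := by
  constructor
  · rintro (rfl | ⟨rfl, hx⟩)
    · exact ⟨rfl, le_rfl⟩
    · exact ⟨(bottom_σ hσ hb x).symm, hx ▸ Bool.false_le _⟩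
  · rintro ⟨h, hle⟩
    cases hx : b x <;> cases hy : b y
    · rw [bottom_of_false hx, bottom_of_false hy] at h
      exact .inl h
    · rw [bottom_of_false hx, bottom_of_true hy] at h
      exact .inr ⟨by rw [h, hσ y], hx⟩
    · rw [hx, hy] at hle
      exact absurd hle (by decide)
    · rw [bottom_of_true hx, bottom_of_true hy] at h
      exact .inl (hσ.injective h)

theorem existsUnique_rel (hσ : Function.Involutive σ) (hb : ∀ x, b (σ x) = !b x) (x : α) :
    ∃! y, y ≠ x ∧ (Rel σ b x y ∨ Rel σ b y x) := by
  refine ⟨σ x, ⟨apply_ne_self hb x, ?_⟩, ?_⟩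
  · cases hx : b x
    · exact .inl (.inr ⟨rfl, hx⟩)
    · exact .inr (.inr ⟨(hσ x).symm, by simp [hb, hx]⟩)
  · rintro y ⟨hne, (rfl | ⟨rfl, -⟩) | (rfl | ⟨rfl, -⟩)⟩
    · exact absurd rfl hne
    · rfl
    · exact absurd rfl hne
    · exact (hσ y).symm

theorem exists_equiv_twoChains [Fintype α] (hσ : Function.Involutive σ)
    (hb : ∀ x, b (σ x) = !b x) {m : ℕ} (hm : Fintype.card α = 2 * m) :
    ∃ e : α ≃ TwoChains m, ∀ x y, Rel σ b x y ↔ e x ≤ e y := by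
  classical
  let E := equivProdBool hσ hb
  have hcard : Fintype.card {x // b x = false} = m := by
    have := Fintype.card_congr E
    rw [Fintype.card_prod, Fintype.card_bool, hm] at this
    omega
  let g := Fintype.equivFinOfCardEq hcard
  refine ⟨E.trans (g.prodCongr (Equiv.refl Bool)), fun x y => ?_⟩
  rw [rel_iff hσ hb, TwoChains.le_iff]
  change _ ↔ g ⟨bottom σ b x, _⟩ = g ⟨bottom σ b y, _⟩ ∧ b x ≤ b y
  rw [g.injective.eq_iff, Subtype.mk.injEq]

end PairedInvolution

namespace QuaternaryWords

def flipParity : Fin 4 → Fin 4 := ![1, 0, 3, 2]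

def isOdd : Fin 4 → Bool := ![false, true, false, true]

lemma flipParity_flipParity : ∀ v, flipParity (flipParity v) = v := by decide

lemma isOdd_flipParity : ∀ v, isOdd (flipParity v) = !isOdd v := by decide

lemma two_le_flipParity_iff : ∀ v, 2 ≤ flipParity v ↔ 2 ≤ v := by decide

lemma lt_two_iff : ∀ v : Fin 4, v < 2 ↔ v = 0 ∨ v = 1 := by decide

lemma eq_two_of_isOdd_eq_false : ∀ v : Fin 4, 2 ≤ v → isOdd v = false → v = 2 := by decide

lemma eq_zero_of_isOdd_eq_false : ∀ v : Fin 4, v < 2 → isOdd v = false → v = 0 := by decide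

variable {n : ℕ}

def bigCoords (x : Fin n → Fin 4) : Finset (Fin n) := {l | 2 ≤ x l}

lemma mem_bigCoords {x : Fin n → Fin 4} {l : Fin n} : l ∈ bigCoords x ↔ 2 ≤ x l := by
  simp [bigCoords]

variable [NeZero n]

def pivot (x : Fin n → Fin 4) : Fin n :=
  if h : (bigCoords x).Nonempty then (bigCoords x).max' h else 0

lemma pivot_eq_iff {x : Fin n → Fin 4} {l : Fin n} :
    pivot x = l ↔ (2 ≤ x l ∧ ∀ k, l < k → x k < 2) ∨ (l = 0 ∧ ∀ k, x k < 2) := by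
  unfold pivot
  split_ifs with h
  · rw [Finset.max'_eq_iff]
    obtain ⟨k₀, hk₀⟩ := h
    have not_all_small : ¬ ∀ k, x k < 2 := fun h' => (h' k₀).not_ge (mem_bigCoords.mp hk₀)
    simp only [mem_bigCoords, not_all_small, and_false, or_false]
    exact and_congr_right' <| forall_congr' fun k => by rw [← not_imp_not, not_le, not_le]
  · simp only [Finset.not_nonempty_iff_eq_empty, Finset.eq_empty_iff_forall_notMem,
      mem_bigCoords, not_le] at h
    simp [h, eq_comm]

lemma pivot_congr {x y : Fin n → Fin 4} (h : ∀ k, 2 ≤ x k ↔ 2 ≤ y k) :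
    pivot x = pivot y := by
  have : bigCoords x = bigCoords y := by ext k; simp [mem_bigCoords, h]
  simp only [pivot, this]

def partner (x : Fin n → Fin 4) : Fin n → Fin 4 :=
  Function.update x (pivot x) (flipParity (x (pivot x)))

def isUpper (x : Fin n → Fin 4) : Bool := isOdd (x (pivot x))

lemma pivot_partner (x : Fin n → Fin 4) : pivot (partner x) = pivot x :=
  pivot_congr fun k => by
    rcases eq_or_ne k (pivot x) with rfl | hk
    · simp [partner, two_le_flipParity_iff]
    · simp [partner, hk]

lemma partner_involutive : Function.Involutive (partner (n := n)) := fun x => by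
  rw [partner, pivot_partner, partner, Function.update_idem, Function.update_self,
    flipParity_flipParity, Function.update_eq_self]

lemma isUpper_partner (x : Fin n → Fin 4) : isUpper (partner x) = !isUpper x := by
  rw [isUpper, pivot_partner, partner, Function.update_self, isOdd_flipParity, isUpper]

lemma rel_of_leFin {x y : Fin n → Fin 4} (h : leFin x y) :
    PairedInvolution.Rel partner isUpper x y := by
  rcases h with rfl | ⟨l, hbefore, hxl, hyl, hafter⟩ | ⟨h0, hx0, hy1, hrest⟩
  · exact .inl rfl
  · have hp : pivot x = l := pivot_eq_iff.mpr <| .inl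
      ⟨hxl.ge, fun k hk => (lt_two_iff _).mpr (hafter k hk).2⟩
    refine .inr ⟨?_, by rw [isUpper, hp, hxl]; rfl⟩
    rw [partner, hp, Function.eq_update_iff, hxl, hyl]
    refine ⟨rfl, fun k hk => ?_⟩
    rcases lt_or_gt_of_ne hk with hk | hk
    · exact (hbefore k hk).symm
    · exact (hafter k hk).1.symm
  · have hzero : (⟨0, h0⟩ : Fin n) = 0 := Fin.ext (Fin.val_zero n).symm
    rw [hzero] at hx0 hy1
    have hrest' : ∀ k, k ≠ 0 → x k = y k ∧ (x k = 0 ∨ x k = 1) := fun k hk =>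
      hrest k (Nat.one_le_iff_ne_zero.mpr (Fin.val_ne_zero_iff.mpr hk))
    have hp : pivot x = 0 := pivot_eq_iff.mpr <| .inr ⟨rfl, fun k => by
      rcases eq_or_ne k 0 with rfl | hk
      · rw [hx0]; decide
      · exact (lt_two_iff _).mpr (hrest' k hk).2⟩
    refine .inr ⟨?_, by rw [isUpper, hp, hx0]; rfl⟩
    rw [partner, hp, Function.eq_update_iff, hx0, hy1]
    exact ⟨rfl, fun k hk => (hrest' k hk).1.symm⟩

lemma leFin_of_rel {x y : Fin n → Fin 4} (h : PairedInvolution.Rel partner isUpper x y) :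
    leFin x y := by
  rcases h with rfl | ⟨rfl, hx⟩
  · exact .inl rfl
  have partner_of_ne {k : Fin n} (hk : k ≠ pivot x) : partner x k = x k :=
    Function.update_of_ne hk _ _
  rcases pivot_eq_iff.mp (rfl : pivot x = pivot x) with ⟨hbig, hafter⟩ | ⟨hp, hsmall⟩
  · have hx2 := eq_two_of_isOdd_eq_false _ hbig hx
    refine .inr (.inl ⟨pivot x, fun k hk => (partner_of_ne hk.ne).symm, hx2, ?_, fun k hk =>
      ⟨(partner_of_ne hk.ne').symm, (lt_two_iff _).mp (hafter k hk)⟩⟩)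
    rw [partner, Function.update_self, hx2]
    rfl
  · have hx0 := eq_zero_of_isOdd_eq_false _ (hsmall _) hx
    rw [hp] at hx0 partner_of_ne
    have hzero : (⟨0, Nat.pos_of_neZero n⟩ : Fin n) = 0 := Fin.ext (Fin.val_zero n).symm
    refine .inr (.inr ⟨Nat.pos_of_neZero n, by rw [hzero, hx0], ?_, fun k hk =>
      ⟨(partner_of_ne ?_).symm, (lt_two_iff _).mp (hsmall k)⟩⟩)
    · rw [hzero, partner, hp, Function.update_self, hx0]
      rfl
    · rw [Ne, Fin.ext_iff, Fin.val_zero]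
      omega

lemma leFin_iff_rel {x y : Fin n → Fin 4} :
    leFin x y ↔ PairedInvolution.Rel partner isUpper x y :=
  ⟨rel_of_leFin, leFin_of_rel⟩

end QuaternaryWords

/-- `({0,1,2,3}^n, ≤ₙ)` is order-isomorphic to the disjoint union of
`2·4^{n-1}` two-element chains; in particular every element is comparable with
exactly one other element. -/
theorem stmt_9 (n : ℕ) (hn : 1 ≤ n) :
    (∃ e : (Fin n → Fin 4) ≃ TwoChains (2 * 4 ^ (n - 1)),
      ∀ x y : Fin n → Fin 4, leFin x y ↔ e x ≤ e y) ∧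
    ∀ x : Fin n → Fin 4, ∃! y : Fin n → Fin 4, y ≠ x ∧ (leFin x y ∨ leFin y x) := by
  have : NeZero n := ⟨by omega⟩
  have hcard : Fintype.card (Fin n → Fin 4) = 2 * (2 * 4 ^ (n - 1)) := by
    rw [Fintype.card_fun, Fintype.card_fin, Fintype.card_fin, ← Nat.sub_add_cancel hn,
      Nat.add_sub_cancel, pow_succ]
    ring
  simp only [QuaternaryWords.leFin_iff_rel]
  have hσ := QuaternaryWords.partner_involutive (n := n)
  have hb := QuaternaryWords.isUpper_partner (n := n)
  exact ⟨PairedInvolution.exists_equiv_twoChains hσ hb hcard,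
    PairedInvolution.existsUnique_rel hσ hb⟩
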